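/- If p_1 > p_j for every j ≠ 1, then the probability that answer a_1 achieves a strict plurality among N i.i.d. samples, Pr(X_1(ω) > X_j(ω) for all j ≠ 1), tends to 1 as N → ∞. -/

import Mathlib

/-!
By the union bound it suffices that, for each `j ≠ 1`, the probability of `X_j ≥ X_1` tends
to zero. This is a Chernoff bound: weight each sample by `t⁻¹` if it is `a_1`, by `t` if it is
`a_j` and by `1` otherwise, with `t ≥ 1`. Every outcome with `X_j ≥ X_1` has total weight at
least `1`, so its probability is at most the `N`-th power of the mean weight
`1 + p_1 (t⁻¹ - 1) + p_j (t - 1)`, which is below `1` for `t = 2 p_1 / (p_1 + p_j)`.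
-/

open Finset Filter

/-- Number of the `N` samples in `ω` equal to answer `j`. -/
def count {m N : ℕ} (ω : Fin N → Fin m) (j : Fin m) : ℕ :=
  (Finset.univ.filter fun i => ω i = j).card

/-- The set `J(ω)` of answers achieving the maximal count among the samples `ω`. -/
def maxSet {m N : ℕ} (ω : Fin N → Fin m) : Finset (Fin m) :=
  Finset.univ.filter fun j => ∀ k, count ω k ≤ count ω j

/-- Majority-vote probability that answer `l` is returned after `N` i.i.d. samples
drawn from `p`: the most frequent answer is chosen, ties broken uniformly. -/
noncomputable def majorityProb {m : ℕ} (p : Fin m → ℝ) (N : ℕ) (l : Fin m) : ℝ :=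
  ∑ ω : Fin N → Fin m, (∏ i, p (ω i)) *
    (if l ∈ maxSet ω then (1 : ℝ) / ((maxSet ω).card : ℝ) else 0)

section SampleProb

variable {α : Type*} [Fintype α] {N : ℕ}

open Classical in
noncomputable def sampleProb (p : α → ℝ) (E : (Fin N → α) → Prop) : ℝ :=
  ∑ ω, if E ω then ∏ i, p (ω i) else 0

variable {p : α → ℝ}

lemma sampleProb_nonneg (hp : ∀ a, 0 ≤ p a) (E : (Fin N → α) → Prop) :
    0 ≤ sampleProb p E :=
  sum_nonneg fun _ _ => by
    split_ifs
    exacts [prod_nonneg fun _ _ => hp _, le_rfl]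

lemma sampleProb_not (hsum : ∑ a, p a = 1) (E : (Fin N → α) → Prop) :
    sampleProb p (fun ω => ¬ E ω) = 1 - sampleProb p E := by
  rw [eq_sub_iff_add_eq]
  unfold sampleProb
  rw [← sum_add_distrib, ← one_pow N, ← hsum, Fintype.sum_pow]
  exact sum_congr rfl fun ω _ => by by_cases h : E ω <;> simp [h]

lemma sampleProb_exists_le (hp : ∀ a, 0 ≤ p a) {ι : Type*} (s : Finset ι)
    (E : ι → (Fin N → α) → Prop) :
    sampleProb p (fun ω => ∃ j ∈ s, E j ω) ≤ ∑ j ∈ s, sampleProb p (E j) := by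
  classical
  unfold sampleProb
  rw [sum_comm]
  refine sum_le_sum fun ω _ => ?_
  have hterm : ∀ j ∈ s, 0 ≤ if E j ω then ∏ i, p (ω i) else 0 := fun _ _ => by
    split_ifs
    exacts [prod_nonneg fun _ _ => hp _, le_rfl]
  split_ifs with h
  · obtain ⟨j, hj, hE⟩ := h
    simpa [hE] using single_le_sum hterm hj
  · exact sum_nonneg hterm

/-- Exponential Markov inequality. -/
lemma sampleProb_le_pow_of_one_le_prod (hp : ∀ a, 0 ≤ p a) {r : α → ℝ}
    (hr : ∀ a, 0 ≤ r a) (E : (Fin N → α) → Prop)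
    (hE : ∀ ω, E ω → 1 ≤ ∏ i, r (ω i)) :
    sampleProb p E ≤ (∑ a, p a * r a) ^ N := by
  rw [Fintype.sum_pow, sampleProb]
  refine sum_le_sum fun ω _ => ?_
  rw [prod_mul_distrib]
  split_ifs with h
  · exact le_mul_of_one_le_right (prod_nonneg fun _ _ => hp _) (hE ω h)
  · exact mul_nonneg (prod_nonneg fun _ _ => hp _) (prod_nonneg fun _ _ => hr _)

end SampleProb

section Plurality

variable {m N : ℕ}

lemma prod_comp_eq_prod_pow_count {M : Type*} [CommMonoid M] (ω : Fin N → Fin m)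
    (r : Fin m → M) : ∏ i, r (ω i) = ∏ k, r k ^ count ω k := by
  rw [← prod_fiberwise' univ ω r]
  exact prod_congr rfl fun k _ => prod_const _

noncomputable def tilt (i j : Fin m) (t : ℝ) (k : Fin m) : ℝ :=
  if k = i then t⁻¹ else if k = j then t else 1

variable {i j : Fin m} {t : ℝ}

lemma tilt_nonneg (ht : 0 ≤ t) (k : Fin m) : 0 ≤ tilt i j t k := by
  unfold tilt
  split_ifs <;> positivity

lemma one_le_prod_tilt (hij : i ≠ j) (ht : 1 ≤ t) {ω : Fin N → Fin m}
    (h : count ω i ≤ count ω j) : 1 ≤ ∏ n, tilt i j t (ω n) := by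
  rw [prod_comp_eq_prod_pow_count,
    Fintype.prod_eq_mul i j hij fun k hk => by simp [tilt, hk.1, hk.2]]
  simp only [tilt, if_pos, if_neg hij.symm, inv_pow]
  rw [← div_eq_inv_mul, one_le_div (by positivity)]
  exact pow_le_pow_right₀ ht h

lemma sum_mul_tilt {p : Fin m → ℝ} (hsum : ∑ k, p k = 1) (hij : i ≠ j) :
    ∑ k, p k * tilt i j t k = 1 + p i * (t⁻¹ - 1) + p j * (t - 1) := by
  have h : ∑ k, p k * (tilt i j t k - 1) = p i * (t⁻¹ - 1) + p j * (t - 1) := by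
    rw [Fintype.sum_eq_add i j hij fun k hk => by simp [tilt, hk.1, hk.2]]
    simp [tilt, hij.symm]
  simp only [mul_sub, mul_one, sum_sub_distrib, hsum] at h
  linarith

/-- The ratio `2a / (a + b)` stands in for the optimal tilt `√(a / b)`; unlike it, it stays
finite when `b = 0`. -/
lemma tilted_mean_sub_one_neg {a b : ℝ} (hb : 0 ≤ b) (hba : b < a) :
    a * ((2 * a / (a + b))⁻¹ - 1) + b * (2 * a / (a + b) - 1) < 0 := by
  have ha : 0 < a := hb.trans_lt hba
  field_simp
  nlinarith [sq_pos_of_pos (sub_pos.2 hba)]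

lemma tendsto_sampleProb_count_le {p : Fin m → ℝ} (hp : ∀ k, 0 ≤ p k)
    (hsum : ∑ k, p k = 1) (hij : i ≠ j) (hlt : p j < p i) :
    Tendsto (fun N => sampleProb p fun ω : Fin N → Fin m => count ω i ≤ count ω j)
      atTop (nhds 0) := by
  set t := 2 * p i / (p i + p j)
  have ht : 1 ≤ t := by
    rw [le_div_iff₀ (by linarith [hp j])]
    linarith
  have hbound : ∀ N, (sampleProb p fun ω : Fin N → Fin m => count ω i ≤ count ω j) ≤
      (∑ k, p k * tilt i j t k) ^ N := fun N =>
    sampleProb_le_pow_of_one_le_prod hp (tilt_nonneg (by linarith)) _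
      fun _ => one_le_prod_tilt hij ht
  refine squeeze_zero (fun N => sampleProb_nonneg hp _) hbound
    (tendsto_pow_atTop_nhds_zero_of_lt_one
      (sum_nonneg fun k _ => mul_nonneg (hp k) (tilt_nonneg (by linarith) k)) ?_)
  rw [sum_mul_tilt hsum hij]
  linarith [tilted_mean_sub_one_neg (hp j) hlt]

end Plurality

/-- If `a₁` is the unique most likely answer, the probability that it
achieves a strict plurality among `N` i.i.d. samples tends to `1` as `N → ∞`. -/
theorem strict_plurality_tendsto_one {m : ℕ} (hm : 0 < m) (p : Fin m → ℝ)
    (hnn : ∀ j, 0 ≤ p j) (hsum : ∑ j, p j = 1)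
    (heasy : ∀ j, j ≠ (⟨0, hm⟩ : Fin m) → p j < p ⟨0, hm⟩) :
    Tendsto
      (fun N => ∑ ω : Fin N → Fin m,
        if ∀ j, j ≠ (⟨0, hm⟩ : Fin m) → count ω j < count ω ⟨0, hm⟩ then
          ∏ i, p (ω i) else 0)
      atTop (nhds 1) := by
  set i₀ : Fin m := ⟨0, hm⟩
  have hfail : Tendsto (fun N => sampleProb p fun ω : Fin N → Fin m =>
      ∃ j ∈ univ.erase i₀, count ω i₀ ≤ count ω j) atTop (nhds 0) := by
    refine squeeze_zero (fun N => sampleProb_nonneg hnn _)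
      (fun N => sampleProb_exists_le hnn _ fun j (ω : Fin N → Fin m) =>
        count ω i₀ ≤ count ω j) ?_
    have hpair := tendsto_finsetSum (univ.erase i₀) fun j hj =>
      tendsto_sampleProb_count_le hnn hsum (ne_of_mem_erase hj).symm (heasy j (ne_of_mem_erase hj))
    rwa [sum_const_zero] at hpair
  have hsucc := (tendsto_const_nhds (x := (1 : ℝ))).sub hfail
  rw [sub_zero] at hsucc
  refine hsucc.congr fun N => ?_
  rw [← sampleProb_not hsum]
  refine sum_congr rfl fun ω _ => ?_
  congr 1
  simp
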